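/- arXiv:math/0506115 — 2 statements merged into one kernel-verified Lean document; each statement's English description precedes it below -/
import Mathlib

section
/- Let x = (a b; c d) ∈ SL2(F). If v(c) ≤ v(a) and v(c) ≤ v(d), then x ∈ I · (0, -c^{-1}; c, 0) · I. -/
noncomputable section

/-- The 2-dimensional local field `F = 𝔽_q((t1))((t2))` (iterated Laurent series). -/
abbrev F2 (Fq : Type) [Field Fq] : Type := LaurentSeries (LaurentSeries Fq)

variable (Fq : Type) [Field Fq] [Fintype Fq]

/-- The local parameter `t1`. -/
def t1 : F2 Fq := HahnSeries.single 0 (HahnSeries.single 1 1)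

/-- The local parameter `t2`. -/
def t2 : F2 Fq := HahnSeries.single 1 1

/-- The rank-two valuation `v(x) = (v1 x, v2 x)` of a nonzero `x` (junk value at `0`):
`v2 x` is the `t2`-adic order of `x`, and `v1 x` is the `t1`-adic order of the leading
`t2`-coefficient of `x`. -/
def vv (x : F2 Fq) : ℤ × ℤ := ((x.coeff x.order).order, x.order)

/-- The lexicographic-from-the-right (non-strict) order on `ℤ²`. -/
def lexle (a b : ℤ × ℤ) : Prop := a.2 < b.2 ∨ (a.2 = b.2 ∧ a.1 ≤ b.1)

/-- The lexicographic-from-the-right strict order on `ℤ²`. -/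
def lexlt (a b : ℤ × ℤ) : Prop := a.2 < b.2 ∨ (a.2 = b.2 ∧ a.1 < b.1)

/-- `v(x) ≤ v(y)`, with the convention `v(0) = ∞`. -/
def vle (x y : F2 Fq) : Prop := x ≠ 0 ∧ (y = 0 ∨ lexle (vv Fq x) (vv Fq y))

/-- `v(x) < v(y)`, with the convention `v(0) = ∞`. -/
def vlt (x y : F2 Fq) : Prop := x ≠ 0 ∧ (y = 0 ∨ lexlt (vv Fq x) (vv Fq y))

/-- The rank-two valuation ring `O` of `F`. -/
def Oring : Set (F2 Fq) := {x | x = 0 ∨ lexle (0, 0) (vv Fq x)}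

/-- `SL₂(F)` as the set of 2×2 matrices of determinant 1. -/
def SL2 : Set (Matrix (Fin 2) (Fin 2) (F2 Fq)) := {g | g.det = 1}

/-- The (double) Iwahori subgroup `I ⊆ SL₂(O)`: entries in `O`, lower-left entry in `t1·O`. -/
def Iwahori : Set (Matrix (Fin 2) (Fin 2) (F2 Fq)) :=
  {g | g.det = 1 ∧ (∀ i j, g i j ∈ Oring Fq) ∧ ∃ y ∈ Oring Fq, g 1 0 = t1 Fq * y}

/-- The matrix `η^{(1)}_{i,j} = diag(t1^i t2^j, t1^{-i} t2^{-j})`. -/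
def eta1 (i j : ℤ) : Matrix (Fin 2) (Fin 2) (F2 Fq) :=
  !![t1 Fq ^ i * t2 Fq ^ j, 0; 0, t1 Fq ^ (-i) * t2 Fq ^ (-j)]

/-- The matrix `η^{(2)}_{i,j} = (0, t1^i t2^j; -t1^{-i} t2^{-j}, 0)`. -/
def eta2 (i j : ℤ) : Matrix (Fin 2) (Fin 2) (F2 Fq) :=
  !![0, t1 Fq ^ i * t2 Fq ^ j; -(t1 Fq ^ (-i) * t2 Fq ^ (-j)), 0]

/-- The double coset `I·η·I`. -/
def doubleCoset (η : Matrix (Fin 2) (Fin 2) (F2 Fq)) : Set (Matrix (Fin 2) (Fin 2) (F2 Fq)) :=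
  {x | ∃ g ∈ Iwahori Fq, ∃ h ∈ Iwahori Fq, x = g * η * h}

/-- The right coset `I·z`. -/
def rcoset (z : Matrix (Fin 2) (Fin 2) (F2 Fq)) : Set (Matrix (Fin 2) (Fin 2) (F2 Fq)) :=
  {x | ∃ g ∈ Iwahori Fq, x = g * z}

set_option linter.unusedSectionVars false

lemma vv_mul' (Fq : Type) [Field Fq] (x y : F2 Fq) (hx : x ≠ 0) (hy : y ≠ 0) :
    vv Fq (x * y) = vv Fq x + vv Fq y := by
  unfold vv
  rw [HahnSeries.order_mul hx hy, HahnSeries.coeff_mul_order_add_order,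
    HahnSeries.leadingCoeff_eq, HahnSeries.leadingCoeff_eq,
    HahnSeries.order_mul (show x.coeff x.order ≠ 0 by rw [← HahnSeries.leadingCoeff_eq]; exact HahnSeries.leadingCoeff_ne_zero.mpr hx)
      (show y.coeff y.order ≠ 0 by rw [← HahnSeries.leadingCoeff_eq]; exact HahnSeries.leadingCoeff_ne_zero.mpr hy)]
  rfl

lemma vv_one' (Fq : Type) [Field Fq] : vv Fq 1 = 0 := by
  unfold vv
  rw [HahnSeries.order_one, HahnSeries.coeff_one, if_pos rfl, HahnSeries.order_one]
  rfl

lemma zero_mem_Oring (Fq : Type) [Field Fq] : (0 : F2 Fq) ∈ Oring Fq := Or.inl rfl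

lemma one_mem_Oring (Fq : Type) [Field Fq] : (1 : F2 Fq) ∈ Oring Fq := by
  right
  rw [vv_one']
  exact Or.inr ⟨rfl, le_refl _⟩

lemma lexle_sub (p q : ℤ × ℤ) (h : lexle p q) : lexle 0 (q + -p) := by
  unfold lexle at *
  simp only [Prod.snd_add, Prod.snd_neg, Prod.fst_add, Prod.fst_neg, Prod.snd_zero,
    Prod.fst_zero] at *
  omega

lemma div_mem_Oring (Fq : Type) [Field Fq] (c y : F2 Fq) (h : vle Fq c y) :
    y * c⁻¹ ∈ Oring Fq := by
  obtain ⟨hc, hy⟩ := h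
  by_cases hy0 : y = 0
  · exact Or.inl (by rw [hy0]; exact zero_mul c⁻¹)
  · have hlex : lexle (vv Fq c) (vv Fq y) := hy.resolve_left hy0
    have hcinv : c⁻¹ ≠ 0 := inv_ne_zero (G₀ := F2 Fq) hc
    have hinv : vv Fq c⁻¹ = -vv Fq c := by
      have h2 := vv_mul' Fq c c⁻¹ hc hcinv
      have h3 : c * c⁻¹ = 1 := mul_inv_cancel₀ (G₀ := F2 Fq) hc
      rw [h3, vv_one'] at h2
      exact eq_neg_of_add_eq_zero_left (by rw [add_comm]; exact h2.symm)
    right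
    rw [vv_mul' Fq y c⁻¹ hy0 hcinv, hinv]
    exact lexle_sub _ _ hlex

lemma upper_mem_Iwahori (Fq : Type) [Field Fq] (u : F2 Fq) (hu : u ∈ Oring Fq) :
    (!![1, u; 0, 1] : Matrix (Fin 2) (Fin 2) (F2 Fq)) ∈ Iwahori Fq := by
  refine ⟨by rw [Matrix.det_fin_two_of]; ring, ?_, 0, zero_mem_Oring Fq,
    by exact (mul_zero (t1 Fq)).symm⟩
  intro i j
  fin_cases i <;> fin_cases j <;>
    simp [one_mem_Oring, zero_mem_Oring, hu]

/-- Lemma 1.2(3): if `v(c) ≤ v(a)` and `v(c) ≤ v(d)`, then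
`(a b; c d) ∈ I·(0, -c⁻¹; c, 0)·I`. -/
theorem case_antidiag_c (Fq : Type) [Field Fq] [Fintype Fq] (a b c d : F2 Fq)
    (hx : (!![a, b; c, d] : Matrix (Fin 2) (Fin 2) (F2 Fq)).det = 1)
    (hca : vle Fq c a) (hcd : vle Fq c d) :
    (!![a, b; c, d] : Matrix (Fin 2) (Fin 2) (F2 Fq)) ∈
      doubleCoset Fq !![0, -c⁻¹; c, 0] := by
  have hc : c ≠ 0 := hca.1
  have hdet : a * d - b * c = 1 := by rwa [Matrix.det_fin_two_of] at hx
  refine ⟨!![1, a * c⁻¹; 0, 1], upper_mem_Iwahori Fq _ (div_mem_Oring Fq c a hca),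
    !![1, d * c⁻¹; 0, 1], upper_mem_Iwahori Fq _ (div_mem_Oring Fq c d hcd), ?_⟩
  have hcc : c⁻¹ * c = 1 := inv_mul_cancel₀ (G₀ := F2 Fq) hc
  have hcc' : c * c⁻¹ = 1 := mul_inv_cancel₀ (G₀ := F2 Fq) hc
  have hbc : b * c = a * d - 1 := by rw [← hdet]; ring
  refine Matrix.ext fun i j => ?_
  fin_cases i <;> fin_cases j <;> simp [Matrix.mul_apply, Fin.sum_univ_two]
  · symm
    calc a * c⁻¹ * c
        = a * (c⁻¹ * c) := by ring
      _ = a := by rw [hcc]; exact mul_one a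
  · symm
    calc a * c⁻¹ * c * (d * c⁻¹) + -c⁻¹
        = a * (c⁻¹ * c) * (d * c⁻¹) - c⁻¹ := by ring
      _ = a * 1 * (d * c⁻¹) - c⁻¹ := by rw [hcc]
      _ = a * d * c⁻¹ - 1 * c⁻¹ := by ring
      _ = (a * d - 1) * c⁻¹ := by ring
      _ = b * c * c⁻¹ := by rw [hbc]
      _ = b * (c * c⁻¹) := by ring
      _ = b := by rw [hcc']; exact mul_one b
  · symm
    calc c * (d * c⁻¹)
        = d * (c * c⁻¹) := by ring
      _ = d := by rw [hcc']; exact mul_one d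
end
end

section
/- For any i ∈ ℤ and j > 0 with (i,j) ≥ (0,0), the set of right cosets { I·z : z ∈ C^{(1)}_{i,j} } of the Iwahori subgroup I contained in the double coset C^{(1)}_{i,j} = I·diag(t1^i t2^j, t1^{-i}t2^{-j})·I is uncountable. -/
noncomputable section

variable (Fq : Type) [Field Fq] [Fintype Fq]

section Aux

open HahnSeries

variable (Fq : Type) [Field Fq]

lemma ops_coeff_neg (p : PowerSeries Fq) {n : ℤ} (hn : n < 0) :
    (ofPowerSeries ℤ Fq p).coeff n = 0 := by
  rw [ofPowerSeries_apply]
  apply embDomain_notin_range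
  rintro ⟨m, hm⟩
  simp only [Nat.castOrderEmbedding_apply] at hm
  omega

lemma ops_order_nonneg (p : PowerSeries Fq) : 0 ≤ (ofPowerSeries ℤ Fq p).order := by
  by_cases hp : (ofPowerSeries ℤ Fq p) = 0
  · rw [hp, order_zero]
  · by_contra h
    push_neg at h
    exact coeff_order_eq_zero.not.mpr hp (ops_coeff_neg Fq p h)

/-- Embedding of power series into `F2` as elements of `t2`-order `0`. -/
noncomputable def embF2 (p : PowerSeries Fq) : F2 Fq :=
  HahnSeries.single 0 (ofPowerSeries ℤ Fq p)

lemma embF2_mul (p q : PowerSeries Fq) : embF2 Fq (p * q) = embF2 Fq p * embF2 Fq q := by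
  simp only [embF2, map_mul, single_mul_single, zero_add]

lemma t1_eq_emb : t1 Fq = embF2 Fq PowerSeries.X := by
  rw [embF2, ofPowerSeries_X]; rfl

lemma embF2_mem_O (p : PowerSeries Fq) : embF2 Fq p ∈ Oring Fq := by
  by_cases hp : (ofPowerSeries ℤ Fq p) = 0
  · left; rw [embF2, hp, single_eq_zero]
  · right
    have h1 : (embF2 Fq p).order = 0 := order_single hp
    refine Or.inr ⟨h1.symm, ?_⟩
    show (0:ℤ) ≤ ((embF2 Fq p).coeff (embF2 Fq p).order).order
    rw [h1]
    have h2 : (embF2 Fq p).coeff (0:ℤ) = ofPowerSeries ℤ Fq p := coeff_single_same _ _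
    rw [h2]
    exact ops_order_nonneg Fq p

lemma zero_mem_O : (0 : F2 Fq) ∈ Oring Fq := Or.inl rfl

lemma one_mem_O : (1 : F2 Fq) ∈ Oring Fq := by
  right
  have h0 : (1 : F2 Fq).order = 0 := order_one
  refine Or.inr ⟨h0.symm, ?_⟩
  show (0:ℤ) ≤ ((1 : F2 Fq).coeff (1 : F2 Fq).order).order
  rw [h0]
  have h1 : (1 : F2 Fq).coeff (0:ℤ) = (1 : LaurentSeries Fq) := by
    rw [coeff_one, if_pos rfl]
  rw [h1, order_one]

lemma one_mem_I : (1 : Matrix (Fin 2) (Fin 2) (F2 Fq)) ∈ Iwahori Fq := by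
  refine ⟨Matrix.det_one, ?_, 0, zero_mem_O Fq, ?_⟩
  · intro i j
    rw [Matrix.one_apply]
    split_ifs
    · exact one_mem_O Fq
    · exact zero_mem_O Fq
  · exact (Matrix.one_apply_ne (by decide)).trans (mul_zero (t1 Fq)).symm

open Classical in
/-- The characteristic power series of a set of naturals. -/
noncomputable def chiPS (a : Set ℕ) : PowerSeries Fq :=
  PowerSeries.mk fun n => if n ∈ a then (1 : Fq) else 0

lemma chiPS_inj : Function.Injective (chiPS Fq) := by
  intro a b hab
  ext n
  have h := congrArg (PowerSeries.coeff n) hab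
  simp only [chiPS, PowerSeries.coeff_mk] at h
  by_cases hna : n ∈ a <;> by_cases hnb : n ∈ b <;> simp_all

/-- The element `c_a = t1 · (χ_a as a series in t1)`. -/
noncomputable def cElt (a : Set ℕ) : F2 Fq := embF2 Fq (PowerSeries.X * chiPS Fq a)

lemma cElt_eq (a : Set ℕ) : cElt Fq a = t1 Fq * embF2 Fq (chiPS Fq a) := by
  rw [cElt, embF2_mul, t1_eq_emb]

/-- Lower unipotent matrix with `(1,0)` entry `c_a`. -/
noncomputable def nmat (a : Set ℕ) : Matrix (Fin 2) (Fin 2) (F2 Fq) :=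
  !![1, 0; cElt Fq a, 1]

lemma nmat_mem (a : Set ℕ) : nmat Fq a ∈ Iwahori Fq := by
  refine ⟨?_, ?_, embF2 Fq (chiPS Fq a), embF2_mem_O Fq _, ?_⟩
  · rw [nmat, Matrix.det_fin_two_of]
    ring
  · intro i j
    fin_cases i <;> fin_cases j <;> simp only [nmat, Matrix.cons_val', Matrix.cons_val_zero,
      Matrix.cons_val_one, Matrix.head_cons, Matrix.empty_val', Matrix.cons_val_fin_one,
      Matrix.head_fin_const]
    · exact one_mem_O Fq
    · exact zero_mem_O Fq
    · exact embF2_mem_O Fq _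
    · exact one_mem_O Fq
  · show nmat Fq a 1 0 = _
    simp only [nmat, Matrix.cons_val', Matrix.cons_val_zero, Matrix.cons_val_one,
      Matrix.head_cons, Matrix.empty_val', Matrix.cons_val_fin_one]
    exact cElt_eq Fq a

/-- `z_a = η · n_a`, written out explicitly. -/
noncomputable def zmat (i j : ℤ) (a : Set ℕ) : Matrix (Fin 2) (Fin 2) (F2 Fq) :=
  !![t1 Fq ^ i * t2 Fq ^ j, 0;
     (t1 Fq ^ (-i) * t2 Fq ^ (-j)) * cElt Fq a, t1 Fq ^ (-i) * t2 Fq ^ (-j)]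

lemma zmat_eq (i j : ℤ) (a : Set ℕ) : zmat Fq i j a = eta1 Fq i j * nmat Fq a := by
  apply Matrix.ext
  intro i' j'
  fin_cases i' <;> fin_cases j' <;>
    simp [zmat, eta1, nmat, Matrix.mul_apply, Fin.sum_univ_two] <;> ring

lemma zmat_mem (i j : ℤ) (a : Set ℕ) : zmat Fq i j a ∈ doubleCoset Fq (eta1 Fq i j) :=
  ⟨1, one_mem_I Fq, nmat Fq a, nmat_mem Fq a, by
    rw [zmat_eq]
    exact congrArg (· * nmat Fq a) (Matrix.one_mul (eta1 Fq i j)).symm⟩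

lemma t1_ne : t1 Fq ≠ 0 := single_ne_zero (single_ne_zero one_ne_zero)

lemma t2_ne : t2 Fq ≠ 0 := single_ne_zero one_ne_zero

/-- the element `t1` viewed in the coefficient field `Fq((t1))`. -/
noncomputable def sig : LaurentSeries Fq := HahnSeries.single (1:ℤ) (1:Fq)

lemma sig_ne : sig Fq ≠ 0 := single_ne_zero one_ne_zero

set_option maxHeartbeats 2000000 in
set_option synthInstance.maxHeartbeats 1000000 in
lemma zmat_rcoset_inj (i j : ℤ) (hj : 0 < j) {a b : Set ℕ}
    (hab : rcoset Fq (zmat Fq i j a) = rcoset Fq (zmat Fq i j b)) : a = b := by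
  have hmem : zmat Fq i j a ∈ rcoset Fq (zmat Fq i j a) :=
    ⟨1, one_mem_I Fq, (Matrix.one_mul _).symm⟩
  rw [hab] at hmem
  obtain ⟨g, ⟨hdet, hO, y, hy, hg10⟩, hzg⟩ := hmem
  have hAne : t1 Fq ^ i * t2 Fq ^ j ≠ 0 :=
    mul_ne_zero (zpow_ne_zero (G₀ := F2 Fq) i (t1_ne Fq)) (zpow_ne_zero (G₀ := F2 Fq) j (t2_ne Fq))
  have hBne : t1 Fq ^ (-i) * t2 Fq ^ (-j) ≠ 0 :=
    mul_ne_zero (zpow_ne_zero (G₀ := F2 Fq) (-i) (t1_ne Fq))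
      (zpow_ne_zero (G₀ := F2 Fq) (-j) (t2_ne Fq))
  -- matrix entry equations
  have hz01 : zmat Fq i j b 0 1 = 0 := by simp [zmat]
  have hz11 : zmat Fq i j b 1 1 = t1 Fq ^ (-i) * t2 Fq ^ (-j) := by simp [zmat]
  have hz00 : zmat Fq i j b 0 0 = t1 Fq ^ i * t2 Fq ^ j := by simp [zmat]
  have hz10 : zmat Fq i j b 1 0 = (t1 Fq ^ (-i) * t2 Fq ^ (-j)) * cElt Fq b := by simp [zmat]
  have hz11a : zmat Fq i j a 1 1 = t1 Fq ^ (-i) * t2 Fq ^ (-j) := by simp [zmat]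
  have hz10a : zmat Fq i j a 1 0 = (t1 Fq ^ (-i) * t2 Fq ^ (-j)) * cElt Fq a := by simp [zmat]
  have h11 : t1 Fq ^ (-i) * t2 Fq ^ (-j)
      = g 1 0 * 0 + g 1 1 * (t1 Fq ^ (-i) * t2 Fq ^ (-j)) := by
    calc t1 Fq ^ (-i) * t2 Fq ^ (-j) = zmat Fq i j a 1 1 := hz11a.symm
      _ = (g * zmat Fq i j b) 1 1 := by rw [hzg]
      _ = g 1 0 * zmat Fq i j b 0 1 + g 1 1 * zmat Fq i j b 1 1 := by
          rw [Matrix.mul_apply, Fin.sum_univ_two]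
      _ = g 1 0 * 0 + g 1 1 * (t1 Fq ^ (-i) * t2 Fq ^ (-j)) := by rw [hz01, hz11]
  have h10 : (t1 Fq ^ (-i) * t2 Fq ^ (-j)) * cElt Fq a
      = g 1 0 * (t1 Fq ^ i * t2 Fq ^ j)
        + g 1 1 * ((t1 Fq ^ (-i) * t2 Fq ^ (-j)) * cElt Fq b) := by
    calc (t1 Fq ^ (-i) * t2 Fq ^ (-j)) * cElt Fq a = zmat Fq i j a 1 0 := hz10a.symm
      _ = (g * zmat Fq i j b) 1 0 := by rw [hzg]
      _ = g 1 0 * zmat Fq i j b 0 0 + g 1 1 * zmat Fq i j b 1 0 := by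
          rw [Matrix.mul_apply, Fin.sum_univ_two]
      _ = g 1 0 * (t1 Fq ^ i * t2 Fq ^ j)
            + g 1 1 * ((t1 Fq ^ (-i) * t2 Fq ^ (-j)) * cElt Fq b) := by rw [hz00, hz10]
  -- g 1 1 = 1
  have h11' : (g 1 1 - 1) * (t1 Fq ^ (-i) * t2 Fq ^ (-j)) = 0 := by
    calc (g 1 1 - 1) * (t1 Fq ^ (-i) * t2 Fq ^ (-j))
        = (g 1 0 * 0 + g 1 1 * (t1 Fq ^ (-i) * t2 Fq ^ (-j)))
            - (t1 Fq ^ (-i) * t2 Fq ^ (-j)) - g 1 0 * 0 := by ring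
      _ = (t1 Fq ^ (-i) * t2 Fq ^ (-j))
            - (t1 Fq ^ (-i) * t2 Fq ^ (-j)) - g 1 0 * 0 := by rw [← h11]
      _ = 0 := by ring
  have hg11 : g 1 1 = 1 := by
    rcases mul_eq_zero (M₀ := F2 Fq) |>.mp h11' with h | h
    · exact sub_eq_zero.mp h
    · exact absurd h hBne
  -- the unit relation
  have hti : t1 Fq ^ i * t1 Fq ^ (-i) = 1 := by
    have e1 : t1 Fq ^ (-i) = (t1 Fq ^ i)⁻¹ := zpow_neg (α := F2 Fq) (t1 Fq) i
    rw [e1]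
    exact mul_inv_cancel₀ (G₀ := F2 Fq) (zpow_ne_zero (G₀ := F2 Fq) i (t1_ne Fq))
  have htj : t2 Fq ^ j * t2 Fq ^ (-j) = 1 := by
    have e1 : t2 Fq ^ (-j) = (t2 Fq ^ j)⁻¹ := zpow_neg (α := F2 Fq) (t2 Fq) j
    rw [e1]
    exact mul_inv_cancel₀ (G₀ := F2 Fq) (zpow_ne_zero (G₀ := F2 Fq) j (t2_ne Fq))
  have hu : (t1 Fq ^ i * t2 Fq ^ j) * (t1 Fq ^ (-i) * t2 Fq ^ (-j)) = 1 := by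
    calc (t1 Fq ^ i * t2 Fq ^ j) * (t1 Fq ^ (-i) * t2 Fq ^ (-j))
        = (t1 Fq ^ i * t1 Fq ^ (-i)) * (t2 Fq ^ j * t2 Fq ^ (-j)) := by ring
      _ = 1 := by rw [hti, htj]; exact one_mul (1 : F2 Fq)
  -- power identities
  have hP : t1 Fq ^ (2*i+1) = t1 Fq ^ i * (t1 Fq * t1 Fq ^ i) := by
    have e0 : (2*i+1 : ℤ) = i + (1 + i) := by ring
    rw [e0]
    have e1 : t1 Fq ^ (i + (1+i)) = t1 Fq ^ i * t1 Fq ^ (1+i) :=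
      zpow_add₀ (G₀ := F2 Fq) (t1_ne Fq) i (1+i)
    have e2 : t1 Fq ^ ((1:ℤ)+i) = t1 Fq ^ (1:ℤ) * t1 Fq ^ i :=
      zpow_add₀ (G₀ := F2 Fq) (t1_ne Fq) 1 i
    have e3 : t1 Fq ^ (1:ℤ) = t1 Fq := zpow_one (t1 Fq)
    rw [e1, e2, e3]
  have hQ : t2 Fq ^ (2*j) = t2 Fq ^ j * t2 Fq ^ j := by
    have e0 : (2*j : ℤ) = j + j := by ring
    rw [e0]
    exact zpow_add₀ (G₀ := F2 Fq) (t2_ne Fq) j j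
  have hPQ : t1 Fq ^ (2*i+1) * t2 Fq ^ (2*j)
      = t1 Fq * ((t1 Fq ^ i * t2 Fq ^ j) * (t1 Fq ^ i * t2 Fq ^ j)) := by
    rw [hP, hQ]; ring
  -- the key equation
  rw [hg10, hg11] at h10
  have s1 : (t1 Fq ^ (-i) * t2 Fq ^ (-j)) * (cElt Fq a - cElt Fq b)
      = t1 Fq * y * (t1 Fq ^ i * t2 Fq ^ j) := by
    calc (t1 Fq ^ (-i) * t2 Fq ^ (-j)) * (cElt Fq a - cElt Fq b)
        = (t1 Fq ^ (-i) * t2 Fq ^ (-j)) * cElt Fq a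
            - (t1 Fq ^ (-i) * t2 Fq ^ (-j)) * cElt Fq b := by ring
      _ = (t1 Fq * y * (t1 Fq ^ i * t2 Fq ^ j)
            + 1 * (t1 Fq ^ (-i) * t2 Fq ^ (-j) * cElt Fq b))
            - (t1 Fq ^ (-i) * t2 Fq ^ (-j)) * cElt Fq b := by rw [← h10]
      _ = t1 Fq * y * (t1 Fq ^ i * t2 Fq ^ j) := by ring
  have s2 : cElt Fq a - cElt Fq b = t1 Fq ^ (2*i+1) * (t2 Fq ^ (2*j) * y) := by
    calc cElt Fq a - cElt Fq b
        = (t1 Fq ^ i * t2 Fq ^ j * (t1 Fq ^ (-i) * t2 Fq ^ (-j)))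
            * (cElt Fq a - cElt Fq b) := by rw [hu]; exact (one_mul (cElt Fq a - cElt Fq b)).symm
      _ = (t1 Fq ^ i * t2 Fq ^ j)
            * ((t1 Fq ^ (-i) * t2 Fq ^ (-j)) * (cElt Fq a - cElt Fq b)) := by ring
      _ = (t1 Fq ^ i * t2 Fq ^ j) * (t1 Fq * y * (t1 Fq ^ i * t2 Fq ^ j)) := by rw [s1]
      _ = (t1 Fq * (t1 Fq ^ i * t2 Fq ^ j * (t1 Fq ^ i * t2 Fq ^ j))) * y := by ring
      _ = (t1 Fq ^ (2*i+1) * t2 Fq ^ (2*j)) * y := by rw [← hPQ]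
      _ = t1 Fq ^ (2*i+1) * (t2 Fq ^ (2*j) * y) := by ring
  have key : cElt Fq a = t1 Fq ^ (2*i+1) * (t2 Fq ^ (2*j) * y) + cElt Fq b := by
    rw [← s2]; ring
  -- rewrite powers as single's
  have hPs : t1 Fq ^ (2*i+1) = HahnSeries.single (0:ℤ) (sig Fq ^ (2*i+1)) := by
    have hmz := map_zpow₀
      (HahnSeries.C : LaurentSeries Fq →+* LaurentSeries (LaurentSeries Fq))
      (sig Fq) (2*i+1)
    exact hmz.symm
  have hQs : t2 Fq ^ (2*j) = HahnSeries.single ((2*j):ℤ) (1 : LaurentSeries Fq) := by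
    have hn : (((2*j).toNat : ℕ) : ℤ) = 2*j := Int.toNat_of_nonneg (by omega)
    calc t2 Fq ^ (2*j : ℤ) = t2 Fq ^ ((((2*j).toNat : ℕ)) : ℤ) := by rw [hn]
      _ = t2 Fq ^ ((2*j).toNat : ℕ) := zpow_natCast (t2 Fq) ((2*j).toNat)
      _ = HahnSeries.single (((2*j).toNat : ℕ) • (1:ℤ)) ((1 : LaurentSeries Fq) ^ (2*j).toNat) := by
          exact single_pow _ _ _
      _ = HahnSeries.single ((2*j):ℤ) (1 : LaurentSeries Fq) := by
          have c1 : (((2*j).toNat : ℕ) • (1:ℤ)) = 2*j := by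
            rw [nsmul_eq_mul, mul_one]; exact hn
          have c2 : (1 : LaurentSeries Fq) ^ ((2*j).toNat) = 1 := one_pow _
          rw [c1, c2]
  rw [hPs, hQs] at key
  -- extract the coefficient at (t2-degree) 0
  have hy0 : y.coeff (-(2*j) : ℤ) = 0 := by
    rcases hy with h0 | hl
    · rw [h0]; exact HahnSeries.coeff_zero
    · have hl' : (0:ℤ) < y.order ∨ ((0:ℤ) = y.order ∧ (0:ℤ) ≤ (y.coeff y.order).order) := hl
      have hord : (0:ℤ) ≤ y.order := by
        rcases hl' with h | ⟨h, _⟩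
        · exact le_of_lt h
        · exact le_of_eq h
      exact coeff_eq_zero_of_lt_order (lt_of_lt_of_le (by omega) hord)
  have r2 : (HahnSeries.single ((2*j):ℤ) (1 : LaurentSeries Fq) * y).coeff (0:ℤ)
      = 1 * y.coeff (-(2*j) : ℤ) := by
    have e0 : (-(2*j) + 2*j : ℤ) = 0 := by omega
    rw [← e0]
    exact coeff_single_mul_add
  have r1 : (HahnSeries.single (0:ℤ) (sig Fq ^ (2*i+1))
        * (HahnSeries.single ((2*j):ℤ) (1 : LaurentSeries Fq) * y)).coeff (0:ℤ)
      = sig Fq ^ (2*i+1) * ((HahnSeries.single ((2*j):ℤ) (1 : LaurentSeries Fq) * y).coeff (0:ℤ)) :=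
    coeff_single_zero_mul
  have hM : (HahnSeries.single (0:ℤ) (sig Fq ^ (2*i+1))
        * (HahnSeries.single ((2*j):ℤ) (1 : LaurentSeries Fq) * y)).coeff (0:ℤ) = 0 := by
    rw [r1, r2, hy0]; ring
  have hEq : ofPowerSeries ℤ Fq (PowerSeries.X * chiPS Fq a)
      = (HahnSeries.single (0:ℤ) (sig Fq ^ (2*i+1))
          * (HahnSeries.single ((2*j):ℤ) (1 : LaurentSeries Fq) * y)).coeff (0:ℤ)
        + ofPowerSeries ℤ Fq (PowerSeries.X * chiPS Fq b) := by
    calc ofPowerSeries ℤ Fq (PowerSeries.X * chiPS Fq a)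
        = (cElt Fq a).coeff (0:ℤ) := (coeff_single_same _ _).symm
      _ = (HahnSeries.single (0:ℤ) (sig Fq ^ (2*i+1))
            * (HahnSeries.single ((2*j):ℤ) (1 : LaurentSeries Fq) * y) + cElt Fq b).coeff (0:ℤ) := by
          rw [key]
      _ = (HahnSeries.single (0:ℤ) (sig Fq ^ (2*i+1))
            * (HahnSeries.single ((2*j):ℤ) (1 : LaurentSeries Fq) * y)).coeff (0:ℤ)
          + (cElt Fq b).coeff (0:ℤ) := coeff_add
      _ = (HahnSeries.single (0:ℤ) (sig Fq ^ (2*i+1))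
            * (HahnSeries.single ((2*j):ℤ) (1 : LaurentSeries Fq) * y)).coeff (0:ℤ)
          + ofPowerSeries ℤ Fq (PowerSeries.X * chiPS Fq b) := by
          exact congrArg (_ + ·) (coeff_single_same _ _)
  have hfin : ofPowerSeries ℤ Fq (PowerSeries.X * chiPS Fq a)
      = ofPowerSeries ℤ Fq (PowerSeries.X * chiPS Fq b) := by
    rw [hM] at hEq
    rw [hEq]; ring
  have hXc : PowerSeries.X * chiPS Fq a = PowerSeries.X * chiPS Fq b :=
    ofPowerSeries_injective hfin
  exact chiPS_inj Fq (mul_left_cancel₀ PowerSeries.X_ne_zero hXc)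

end Aux

/-- Remark 1.4: for `j > 0` (and `(i,j) ≥ (0,0)`), the set of right cosets `I·z` with
`z ∈ C^{(1)}_{i,j}` is uncountable. -/
theorem uncountably_many_cosets (Fq : Type) [Field Fq] [Fintype Fq] (i j : ℤ)
    (hj : 0 < j) (hij : lexle (0, 0) (i, j)) :
    ¬ ({S : Set (Matrix (Fin 2) (Fin 2) (F2 Fq)) |
        ∃ z ∈ doubleCoset Fq (eta1 Fq i j), S = rcoset Fq z}).Countable := by
  intro hcount
  have hinj : Function.Injective (fun a : Set ℕ => rcoset Fq (zmat Fq i j a)) := by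
    intro a b hab
    exact zmat_rcoset_inj Fq i j hj hab
  have hsub : Set.range (fun a : Set ℕ => rcoset Fq (zmat Fq i j a))
      ⊆ {S : Set (Matrix (Fin 2) (Fin 2) (F2 Fq)) |
          ∃ z ∈ doubleCoset Fq (eta1 Fq i j), S = rcoset Fq z} := by
    rintro S ⟨a, rfl⟩
    exact ⟨zmat Fq i j a, zmat_mem Fq i j a, rfl⟩
  have hcr : (Set.range (fun a : Set ℕ => rcoset Fq (zmat Fq i j a))).Countable :=
    hcount.mono hsub
  haveI : Countable (Set ℕ) := by
    haveI := hcr.to_subtype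
    exact Countable.of_equiv _ (Equiv.ofInjective _ hinj).symm
  obtain ⟨f, hf⟩ := exists_injective_nat (Set ℕ)
  exact Function.cantor_injective f hf
end
end
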